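/- arXiv:1304.2472 — 11 statements merged into one kernel-verified Lean document; each statement's English description precedes it below -/
import Mathlib

section
/- Let A ⊆ ℂ be a finite set, m : ℂ → ℂ, and let s ∈ ℂ with s ≠ α for every α ∈ A. Then exp of the derivative at w = 0 of the entire function w ↦ Σ_{α∈A} m(α) (s−α)^{−w} equals Π_{α∈A} (s−α)^{−m(α)}. -/
open Complex

theorem hasDerivAt_cpow_neg_at_zero {c : ℂ} (hc : c ≠ 0) :
    HasDerivAt (fun w : ℂ => c ^ (-w)) (-log c) 0 := by
  simpa using (hasDerivAt_neg (0 : ℂ)).const_cpow (Or.inl hc)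

theorem deriv_sum_mul_cpow_neg_at_zero {ι : Type*} (A : Finset ι) (m c : ι → ℂ)
    (hc : ∀ i ∈ A, c i ≠ 0) :
    deriv (fun w : ℂ => ∑ i ∈ A, m i * c i ^ (-w)) 0 = -∑ i ∈ A, m i * log (c i) := by
  have hasDeriv : HasDerivAt (fun w : ℂ => ∑ i ∈ A, m i * c i ^ (-w))
      (∑ i ∈ A, m i * -log (c i)) 0 :=
    HasDerivAt.fun_sum fun i hi => (hasDerivAt_cpow_neg_at_zero (hc i hi)).const_mul (m i)
  simp only [hasDeriv.deriv, mul_neg, Finset.sum_neg_distrib]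

theorem exp_neg_mul_log {c : ℂ} (hc : c ≠ 0) (z : ℂ) : exp (-(z * log c)) = c ^ (-z) := by
  rw [cpow_def_of_ne_zero hc, neg_mul_eq_neg_mul, mul_comm]

theorem absolute_zeta_exponential_polynomial (A : Finset ℂ) (m : ℂ → ℂ) (s : ℂ)
    (hs : ∀ α ∈ A, s ≠ α) :
    Complex.exp (deriv (fun w : ℂ => ∑ α ∈ A, m α * (s - α) ^ (-w)) 0) =
    ∏ α ∈ A, (s - α) ^ (-(m α)) := by
  have hne : ∀ α ∈ A, s - α ≠ 0 := fun α hα => sub_ne_zero.mpr (hs α hα)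
  rw [deriv_sum_mul_cpow_neg_at_zero A m (fun α => s - α) hne, ← Finset.sum_neg_distrib,
    exp_sum]
  exact Finset.prod_congr rfl fun α hα => exp_neg_mul_log (hne α hα) (m α)
end

section
/- Let A₁, A₂ ⊆ ℂ be finite sets, m₁, m₂ : ℂ → ℂ, and N_i(u) = Σ_{α∈A_i} m_i(α) u^α for i = 1, 2. Let s, w ∈ ℂ with Re(w) > 0 and Re(s) > Re(α₁) + Re(α₂) for every α₁ ∈ A₁ and α₂ ∈ A₂. Then (1/Γ(w)) · ∫_{1}^{∞} N₁(u) N₂(u) · u^{−s−1} (log u)^{w−1} du = Σ_{α₁∈A₁} Σ_{α₂∈A₂} m₁(α₁) m₂(α₂) (s−(α₁+α₂))^{−w}. -/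
open MeasureTheory Complex Set Filter Topology

/-! Expanding the product, `N₁ N₂ (u) = ∑ m₁(α₁) m₂(α₂) u ^ (α₁ + α₂)`, so by linearity it suffices
to integrate a single power `u ^ β`. The substitution `u = exp t` turns
`∫₁^∞ u ^ (β - s - 1) (log u) ^ (w - 1) du` into the Laplace transform
`∫₀^∞ t ^ (w - 1) exp (-(s - β) t) dt`, which equals `Γ(w) (s - β) ^ (-w)`: both sides are
holomorphic in `b = s - β` on the half-plane `0 < re b`, and they agree for real `b > 0` by
rescaling Euler's integral. -/

lemma norm_cpow_mul_exp_neg_mul {t : ℝ} (ht : 0 < t) (w b : ℂ) :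
    ‖(t : ℂ) ^ w * cexp (-(b * t))‖ = t ^ w.re * Real.exp (-b.re * t) := by
  rw [norm_mul, norm_cpow_eq_rpow_re_of_pos ht, norm_exp]
  simp

lemma integrableOn_cpow_mul_exp_neg_mul {w b : ℂ} (hw : 0 < w.re) (hb : 0 < b.re) :
    IntegrableOn (fun t : ℝ ↦ (t : ℂ) ^ (w - 1) * cexp (-(b * t))) (Ioi 0) := by
  refine Integrable.mono' (g := fun t ↦ t ^ (w - 1).re * Real.exp (-b.re * t ^ (1 : ℝ)))
    (integrableOn_rpow_mul_exp_neg_mul_rpow (by simpa using hw) one_pos hb)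
    (by fun_prop) ?_
  filter_upwards [ae_restrict_mem measurableSet_Ioi] with t ht
  rw [norm_cpow_mul_exp_neg_mul ht, Real.rpow_one]

lemma differentiableAt_integral_cpow_mul_exp_neg_mul {w z : ℂ} (hw : 0 < w.re) (hz : 0 < z.re) :
    DifferentiableAt ℂ (fun b ↦ ∫ t in Ioi (0 : ℝ), (t : ℂ) ^ (w - 1) * cexp (-(b * t))) z := by
  have hε : 0 < z.re / 2 := half_pos hz
  have hre {x : ℂ} (hx : x ∈ Metric.ball z (z.re / 2)) : z.re / 2 < x.re := by
    have := (abs_re_le_norm (x - z)).trans_lt (mem_ball_iff_norm.mp hx)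
    rw [sub_re] at this
    linarith [abs_lt.mp this]
  refine (hasDerivAt_integral_of_dominated_loc_of_deriv_le (μ := volume.restrict (Ioi 0))
    (F := fun x (t : ℝ) ↦ (t : ℂ) ^ (w - 1) * cexp (-(x * t)))
    (F' := fun x (t : ℝ) ↦ -(t : ℂ) * ((t : ℂ) ^ (w - 1) * cexp (-(x * t))))
    (bound := fun t ↦ t ^ w.re * Real.exp (-(z.re / 2) * t ^ (1 : ℝ)))
    (Metric.ball_mem_nhds z hε) (.of_forall fun _ ↦ by fun_prop)
    (integrableOn_cpow_mul_exp_neg_mul hw hz) (by fun_prop) ?_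
    (integrableOn_rpow_mul_exp_neg_mul_rpow (by linarith) one_pos hε) ?_).2.differentiableAt
  · filter_upwards [ae_restrict_mem measurableSet_Ioi] with t (ht : 0 < t) x hx
    rw [norm_mul, norm_neg, norm_real, Real.norm_of_nonneg ht.le,
      norm_cpow_mul_exp_neg_mul ht, Real.rpow_one, ← mul_assoc, sub_re, one_re,
      Real.rpow_sub_one ht.ne', mul_div_cancel₀ _ ht.ne']
    have hxre := hre hx
    gcongr
  · filter_upwards with t x _
    exact ((hasDerivAt_mul_const (t : ℂ)).fun_neg.cexp.const_mul _).congr_deriv (by ring)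

lemma eqOn_re_pos_of_eq_ofReal {E : Type*} [NormedAddCommGroup E] [NormedSpace ℂ E] {f g : ℂ → E}
    (hf : AnalyticOnNhd ℂ f {z | 0 < z.re}) (hg : AnalyticOnNhd ℂ g {z | 0 < z.re})
    (hfg : ∀ r : ℝ, 0 < r → f r = g r) : EqOn f g {z | 0 < z.re} := by
  have hreal : Tendsto ((↑) : ℝ → ℂ) (𝓝[≠] 1) (𝓝[≠] 1) := by
    rw [tendsto_nhdsWithin_iff]
    exact ⟨tendsto_nhdsWithin_of_tendsto_nhds continuous_ofReal.continuousAt,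
      eventually_nhdsWithin_of_forall fun r hr ↦ ofReal_ne_one.mpr hr⟩
  refine hf.eqOn_of_preconnected_of_frequently_eq hg (convex_halfSpace_re_gt 0).isPreconnected
    (z₀ := 1) (by simp) (hreal.frequently ?_)
  exact ((eventually_gt_nhds one_pos).filter_mono nhdsWithin_le_nhds).frequently.mono hfg

lemma integral_cpow_mul_exp_neg_mul_Ioi_of_re_pos {w b : ℂ} (hw : 0 < w.re) (hb : 0 < b.re) :
    ∫ t in Ioi (0 : ℝ), (t : ℂ) ^ (w - 1) * cexp (-(b * t)) = Gamma w * b ^ (-w) := by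
  refine eqOn_re_pos_of_eq_ofReal
    (f := fun b ↦ ∫ t in Ioi (0 : ℝ), (t : ℂ) ^ (w - 1) * cexp (-(b * t)))
    (g := fun b ↦ Gamma w * b ^ (-w)) ?_ ?_ (fun r hr ↦ ?_) hb
  · exact DifferentiableOn.analyticOnNhd
      (fun z hz ↦ (differentiableAt_integral_cpow_mul_exp_neg_mul hw hz).differentiableWithinAt)
      (isOpen_lt continuous_const continuous_re)
  · exact DifferentiableOn.analyticOnNhd
      (fun z hz ↦ ((differentiableAt_id.cpow_const (Or.inl hz)).const_mul _).differentiableWithinAt)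
      (isOpen_lt continuous_const continuous_re)
  · have harg : (r : ℂ).arg ≠ Real.pi := by
      rw [arg_ofReal_of_nonneg hr.le]
      exact Real.pi_ne_zero.symm
    rw [integral_cpow_mul_exp_neg_mul_Ioi hw hr, one_div, inv_cpow _ _ harg, cpow_neg, mul_comm]

lemma ofReal_exp_cpow (t : ℝ) (z : ℂ) : (Real.exp t : ℂ) ^ z = cexp (t * z) := by
  rw [cpow_def_of_ne_zero (by exact_mod_cast (Real.exp_pos t).ne'),
    ← ofReal_log (Real.exp_pos t).le, Real.log_exp]

lemma exp_smul_cpow_neg_sub_one_mul_log_cpow (t : ℝ) (b w : ℂ) :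
    Real.exp t • ((Real.exp t : ℂ) ^ (-b - 1) * (Real.log (Real.exp t) : ℂ) ^ (w - 1)) =
      (t : ℂ) ^ (w - 1) * cexp (-(b * t)) := by
  rw [Real.log_exp, real_smul, ofReal_exp_cpow, ofReal_exp, ← mul_assoc, ← Complex.exp_add,
    show (t : ℂ) + t * (-b - 1) = -(b * t) by ring, mul_comm]

lemma integrableOn_cpow_neg_sub_one_mul_log_cpow {b w : ℂ} (hw : 0 < w.re) (hb : 0 < b.re) :
    IntegrableOn (fun u : ℝ ↦ (u : ℂ) ^ (-b - 1) * (Real.log u : ℂ) ^ (w - 1)) (Ioi 1) := by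
  rw [← Real.exp_zero, ← integrableOn_comp_exp_Ioi]
  simpa only [exp_smul_cpow_neg_sub_one_mul_log_cpow] using integrableOn_cpow_mul_exp_neg_mul hw hb

lemma integral_cpow_neg_sub_one_mul_log_cpow {b w : ℂ} (hw : 0 < w.re) (hb : 0 < b.re) :
    ∫ u in Ioi (1 : ℝ), (u : ℂ) ^ (-b - 1) * (Real.log u : ℂ) ^ (w - 1) = Gamma w * b ^ (-w) := by
  rw [← Real.exp_zero, ← integral_comp_exp_Ioi]
  simpa only [exp_smul_cpow_neg_sub_one_mul_log_cpow] using
    integral_cpow_mul_exp_neg_mul_Ioi_of_re_pos hw hb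

lemma integral_sum_mul_cpow_mul_cpow_neg_sub_one_mul_log_cpow {ι : Type*} (I : Finset ι)
    (c β : ι → ℂ) {s w : ℂ} (hw : 0 < w.re) (hs : ∀ i ∈ I, (β i).re < s.re) :
    ∫ u in Ioi (1 : ℝ), (∑ i ∈ I, c i * (u : ℂ) ^ β i) * (u : ℂ) ^ (-s - 1) *
        (Real.log u : ℂ) ^ (w - 1) =
      Gamma w * ∑ i ∈ I, c i * (s - β i) ^ (-w) := by
  have hre (i : ι) (hi : i ∈ I) : 0 < (s - β i).re := by simpa using hs i hi
  have hsplit : ∀ u ∈ Ioi (1 : ℝ),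
      (∑ i ∈ I, c i * (u : ℂ) ^ β i) * (u : ℂ) ^ (-s - 1) * (Real.log u : ℂ) ^ (w - 1) =
        ∑ i ∈ I, c i * ((u : ℂ) ^ (-(s - β i) - 1) * (Real.log u : ℂ) ^ (w - 1)) := by
    intro u (hu : 1 < u)
    have hu0 : (u : ℂ) ≠ 0 := ofReal_ne_zero.mpr (zero_lt_one.trans hu).ne'
    rw [Finset.sum_mul, Finset.sum_mul]
    refine Finset.sum_congr rfl fun i _ ↦ ?_
    rw [show -(s - β i) - 1 = β i + (-s - 1) by ring, cpow_add _ _ hu0]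
    ring
  rw [setIntegral_congr_fun measurableSet_Ioi hsplit, integral_finsetSum _ fun i hi ↦
    (integrableOn_cpow_neg_sub_one_mul_log_cpow hw (hre i hi)).const_mul (c i), Finset.mul_sum]
  refine Finset.sum_congr rfl fun i hi ↦ ?_
  rw [integral_const_mul, integral_cpow_neg_sub_one_mul_log_cpow hw (hre i hi)]
  ring

lemma sum_mul_cpow_mul_sum_mul_cpow {u : ℂ} (hu : u ≠ 0) (A₁ A₂ : Finset ℂ) (m₁ m₂ : ℂ → ℂ) :
    (∑ α ∈ A₁, m₁ α * u ^ α) * (∑ α ∈ A₂, m₂ α * u ^ α) =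
      ∑ p ∈ A₁ ×ˢ A₂, m₁ p.1 * m₂ p.2 * u ^ (p.1 + p.2) := by
  rw [Finset.sum_mul_sum, Finset.sum_product]
  refine Finset.sum_congr rfl fun α₁ _ ↦ Finset.sum_congr rfl fun α₂ _ ↦ ?_
  rw [cpow_add _ _ hu]
  ring

theorem absolute_hurwitz_tensor_product (A₁ A₂ : Finset ℂ) (m₁ m₂ : ℂ → ℂ) (s w : ℂ)
    (hw : 0 < w.re) (hs : ∀ α₁ ∈ A₁, ∀ α₂ ∈ A₂, α₁.re + α₂.re < s.re) :
    (1 / Complex.Gamma w) *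
      ∫ u in Set.Ioi (1 : ℝ),
        (∑ α ∈ A₁, m₁ α * (u : ℂ) ^ α) * (∑ α ∈ A₂, m₂ α * (u : ℂ) ^ α) *
          (u : ℂ) ^ (-s - 1) * (Real.log u : ℂ) ^ (w - 1) =
    ∑ α₁ ∈ A₁, ∑ α₂ ∈ A₂, m₁ α₁ * m₂ α₂ * (s - (α₁ + α₂)) ^ (-w) := by
  have hprod : ∀ u ∈ Ioi (1 : ℝ),
      (∑ α ∈ A₁, m₁ α * (u : ℂ) ^ α) * (∑ α ∈ A₂, m₂ α * (u : ℂ) ^ α) *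
          (u : ℂ) ^ (-s - 1) * (Real.log u : ℂ) ^ (w - 1) =
        (∑ p ∈ A₁ ×ˢ A₂, m₁ p.1 * m₂ p.2 * (u : ℂ) ^ (p.1 + p.2)) *
          (u : ℂ) ^ (-s - 1) * (Real.log u : ℂ) ^ (w - 1) := fun u (hu : 1 < u) ↦ by
    rw [sum_mul_cpow_mul_sum_mul_cpow (ofReal_ne_zero.mpr (zero_lt_one.trans hu).ne')]
  have hs' : ∀ p ∈ A₁ ×ˢ A₂, (p.1 + p.2).re < s.re := fun p hp ↦ by
    rw [Finset.mem_product] at hp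
    simpa using hs p.1 hp.1 p.2 hp.2
  rw [setIntegral_congr_fun measurableSet_Ioi hprod,
    integral_sum_mul_cpow_mul_cpow_neg_sub_one_mul_log_cpow _ _ _ hw hs', Finset.sum_product,
    one_div, inv_mul_cancel_left₀ (Gamma_ne_zero_of_re_pos hw)]
end

section
/- Let m ≥ 1 be an integer and let x ∈ ℂ with x + n ≠ 0 for every integer 0 ≤ n ≤ m. Then exp of the derivative at w = 0 of the function w ↦ Σ_{n=0}^{m} (−1)^n · C(m,n) · (x+n)^{−w} equals Π_{n=0}^{m} (x+n)^{(−1)^{n+1} C(m,n)}, where each factor is an integer power (zpow) of the nonzero complex number x+n. -/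
open Complex Finset

theorem Complex.hasDerivAt_cpow_neg_zero {a : ℂ} (ha : a ≠ 0) :
    HasDerivAt (fun w : ℂ => a ^ (-w)) (-log a) 0 := by
  simpa using (hasDerivAt_neg (0 : ℂ)).const_cpow (Or.inl ha)

theorem Complex.exp_deriv_sum_int_mul_cpow_neg {ι : Type*} (s : Finset ι) (a : ι → ℂ)
    (c : ι → ℤ) (ha : ∀ i ∈ s, a i ≠ 0) :
    exp (deriv (fun w : ℂ => ∑ i ∈ s, (c i : ℂ) * a i ^ (-w)) 0) = ∏ i ∈ s, a i ^ (-c i) := by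
  have hderiv : HasDerivAt (fun w : ℂ => ∑ i ∈ s, (c i : ℂ) * a i ^ (-w))
      (∑ i ∈ s, (c i : ℂ) * -log (a i)) 0 :=
    HasDerivAt.fun_sum fun i hi => (hasDerivAt_cpow_neg_zero (ha i hi)).const_mul _
  rw [hderiv.deriv, exp_sum]
  refine prod_congr rfl fun i hi => ?_
  rw [mul_neg, ← neg_mul, ← Int.cast_neg, exp_int_mul, exp_log (ha i hi)]

theorem multiple_gamma_negative_order_general (m : ℕ) (x : ℂ)
    (hx : ∀ n ≤ m, x + (n : ℂ) ≠ 0) :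
    Complex.exp (deriv
        (fun w : ℂ => ∑ n ∈ Finset.range (m + 1),
          (-1 : ℂ) ^ n * (m.choose n : ℂ) * (x + (n : ℂ)) ^ (-w)) 0) =
    ∏ n ∈ Finset.range (m + 1),
      (x + (n : ℂ)) ^ ((-1 : ℤ) ^ (n + 1) * (m.choose n : ℤ)) := by
  have hexponent : ∀ n : ℕ, (-1 : ℤ) ^ (n + 1) * (m.choose n : ℤ) = -((-1) ^ n * m.choose n) :=
    fun n => by ring
  simp_rw [hexponent]
  convert exp_deriv_sum_int_mul_cpow_neg (range (m + 1)) (fun n => x + n)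
    (fun n => (-1) ^ n * m.choose n) fun n hn => hx n (Nat.lt_succ_iff.mp (mem_range.mp hn))
    using 4
  push_cast
  rfl

theorem multiple_gamma_negative_order (m : ℕ) (hm : 1 ≤ m) (x : ℂ)
    (hx : ∀ n ≤ m, x + (n : ℂ) ≠ 0) :
    Complex.exp (deriv
        (fun w : ℂ => ∑ n ∈ Finset.range (m + 1),
          (-1 : ℂ) ^ n * (m.choose n : ℂ) * (x + (n : ℂ)) ^ (-w)) 0) =
    ∏ n ∈ Finset.range (m + 1),
      (x + (n : ℂ)) ^ ((-1 : ℤ) ^ (n + 1) * (m.choose n : ℤ)) :=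
  multiple_gamma_negative_order_general m x hx
end

section
/- Let m ≥ 1 be an integer and let x ∈ ℂ with x + n ≠ 0 for every integer 0 ≤ n ≤ m. Then Π_{n=0}^{m} (x+n)^{(−1)^{n+1} C(m,n)} = ( Π_{n=0}^{m} ((−m−x)+n)^{(−1)^{n+1} C(m,n)} )^{(−1)^m}, where all powers are integer powers (zpow) of nonzero complex numbers. -/
open Complex

theorem multiple_sine_negative_order_trivial (m : ℕ) (hm : 1 ≤ m) (x : ℂ)
    (hx : ∀ n ≤ m, x + (n : ℂ) ≠ 0) :
    ∏ n ∈ Finset.range (m + 1),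
        (x + (n : ℂ)) ^ ((-1 : ℤ) ^ (n + 1) * (m.choose n : ℤ)) =
    (∏ n ∈ Finset.range (m + 1),
        ((-(m : ℂ) - x) + (n : ℂ)) ^ ((-1 : ℤ) ^ (n + 1) * (m.choose n : ℤ))) ^
      ((-1 : ℤ) ^ m) := by
  have hreflect := Finset.prod_range_reflect
    (fun n => ((-(m : ℂ) - x) + (n : ℂ)) ^ ((-1 : ℤ) ^ (n + 1) * (m.choose n : ℤ))) (m + 1)
  rw [← hreflect, ← Finset.prod_zpow]
  have hterm : ∀ j ∈ Finset.range (m + 1),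
      (((-(m : ℂ) - x) + ((m + 1 - 1 - j : ℕ) : ℂ)) ^
          ((-1 : ℤ) ^ ((m + 1 - 1 - j) + 1) * (m.choose (m + 1 - 1 - j) : ℤ))) ^ ((-1 : ℤ) ^ m)
      = (-1 : ℂ) ^ (m.choose j) * (x + (j : ℂ)) ^ ((-1 : ℤ) ^ (j + 1) * (m.choose j : ℤ)) := by
    intro j hj
    rw [Finset.mem_range] at hj
    have hjm : j ≤ m := Nat.lt_succ_iff.mp hj
    have h1 : m + 1 - 1 - j = m - j := by omega
    have hcast : ((m - j : ℕ) : ℂ) = (m : ℂ) - (j : ℂ) := by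
      push_cast [Nat.cast_sub hjm]; ring
    have hbase : (-(m : ℂ) - x) + ((m - j : ℕ) : ℂ) = -(x + (j : ℂ)) := by
      rw [hcast]; ring
    have hchoose : m.choose (m - j) = m.choose j := Nat.choose_symm hjm
    rw [h1, hbase, hchoose, ← zpow_mul]
    have hexp : (-1 : ℤ) ^ ((m - j) + 1) * (m.choose j : ℤ) * (-1 : ℤ) ^ m
        = (-1 : ℤ) ^ (j + 1) * (m.choose j : ℤ) := by
      have : (-1 : ℤ) ^ ((m - j) + 1) * (-1 : ℤ) ^ m = (-1 : ℤ) ^ (j + 1) := by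
        rw [← pow_add]
        have h2 : (m - j) + 1 + m = 2 * (m - j) + (j + 1) := by omega
        rw [h2, pow_add, pow_mul, neg_one_sq, one_pow, one_mul]
      linear_combination (m.choose j : ℤ) * this
    rw [hexp]
    have hne : x + (j : ℂ) ≠ 0 := hx j hjm
    rw [show -(x + (j : ℂ)) = (-1) * (x + (j : ℂ)) by ring, mul_zpow]
    congr 1
    rw [zpow_mul]
    have hodd : Odd ((-1 : ℤ) ^ (j + 1)) := (Int.odd_iff.mpr rfl).pow
    rw [hodd.neg_one_zpow, zpow_natCast]
  rw [Finset.prod_congr rfl hterm, Finset.prod_mul_distrib,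
    Finset.prod_pow_eq_pow_sum, Nat.sum_range_choose]
  have : Even (2 ^ m) := (Nat.even_pow' (by omega)).mpr even_two
  rw [this.neg_one_pow, one_mul]
end

section
/- Let r < 0 be a real number, let m be an integer with r < m ≤ 0, and let x ∈ ℂ. Then the series Σ_{n=0}^{∞} ( r(r+1)⋯(r+n−1)/n! ) · (n+x)^{|m|} converges and its sum is 0, i.e. the function n ↦ ((ascending Pochhammer) (r)_n / n!) · (n+x)^{−m} has sum 0 (HasSum to 0), where (n+x)^{−m} is the natural-number power (n+x)^{|m|} of the complex number n+x since −m ≥ 0. -/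
/-!
The coefficients `multichoose r n = (r)ₙ / n!` satisfy Pascal's rule, so the partial sums of
`∑ multichoose r n` are `multichoose (r + 1) N`; comparing consecutive ratios with
`((n + 1) / (n + 2)) ^ (1 - s)` gives `multichoose s n = O(n ^ (s - 1))` for `s ≤ 1`. Hence for
`r < 0` the series is absolutely convergent with partial sums tending to `0`. The weight
`(n + x) ^ p` is then removed one power at a time, using `n · multichoose r n =
r · multichoose (r + 1) (n - 1)`, which trades a factor `n` for the shift `r ↦ r + 1`,
`x ↦ x + 1`; this stays in the range `r + p < 0`.
-/
open Finset Polynomial Filter Topology Asymptotics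
open scoped Nat

theorem ascPochhammer_eval_eq_prod_range {R : Type*} [CommSemiring R] (n : ℕ) (r : R) :
    (ascPochhammer R n).eval r = ∏ k ∈ range n, (r + k) := by
  induction n with
  | zero => simp
  | succ n ih => rw [ascPochhammer_succ_eval, ih, prod_range_succ]

theorem Real.one_sub_div_le_rpow {a y : ℝ} (ha : 0 ≤ a) (hy : 0 < y) :
    1 - a / y ≤ (y / (y + 1)) ^ a := by
  have hlog : Real.log ((y + 1) / y) ≤ 1 / y :=
    (Real.log_le_sub_one_of_pos (by positivity)).trans_eq (by field_simp; ring)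
  calc 1 - a / y ≤ Real.exp (-(a / y)) := by linarith [Real.add_one_le_exp (-(a / y))]
    _ ≤ Real.exp (-(a * Real.log ((y + 1) / y))) := by
      gcongr
      rw [div_eq_mul_one_div a y]
      exact mul_le_mul_of_nonneg_left hlog ha
    _ = (y / (y + 1)) ^ a := by
      rw [Real.rpow_def_of_pos (by positivity), ← inv_div, Real.log_inv]
      ring_nf

namespace Ring

section Field

variable {𝕜 : Type*} [Field 𝕜] [CharZero 𝕜]

theorem multichoose_eq_div_factorial (r : 𝕜) (n : ℕ) :
    multichoose r n = (ascPochhammer 𝕜 n).eval r / n ! := by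
  rw [eq_div_iff (Nat.cast_ne_zero.mpr n.factorial_ne_zero), mul_comm, ← nsmul_eq_mul,
    factorial_nsmul_multichoose_eq_ascPochhammer, ascPochhammer_smeval_eq_eval]

theorem multichoose_succ_right (r : 𝕜) (n : ℕ) :
    multichoose r (n + 1) = multichoose r n * ((r + n) / (n + 1)) := by
  rw [multichoose_eq_div_factorial, multichoose_eq_div_factorial, ascPochhammer_succ_eval,
    Nat.factorial_succ]
  push_cast
  field_simp

theorem succ_mul_multichoose_succ (r : 𝕜) (n : ℕ) :
    (n + 1) * multichoose r (n + 1) = r * multichoose (r + 1) n := by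
  induction n with
  | zero => simp [multichoose_succ_right]
  | succ n ih =>
    have h₁ : (n + 1 : 𝕜) ≠ 0 := Nat.cast_add_one_ne_zero n
    have h₂ : ((n + 1 : ℕ) + 1 : 𝕜) ≠ 0 := Nat.cast_add_one_ne_zero (n + 1)
    rw [multichoose_succ_right r (n + 1), multichoose_succ_right (r + 1) n, ← mul_assoc r, ← ih]
    field_simp
    push_cast
    ring

theorem sum_range_succ_multichoose (r : 𝕜) (N : ℕ) :
    ∑ n ∈ range (N + 1), multichoose r n = multichoose (r + 1) N := by
  induction N with
  | zero => simp
  | succ N ih => rw [sum_range_succ, ih, add_comm, ← multichoose_succ_succ]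

end Field

theorem abs_multichoose_succ_mul_rpow_le {s : ℝ} (hs : s ≤ 1) {n : ℕ} (hn : 0 ≤ s + n) :
    |multichoose s (n + 1)| * ((n + 1 : ℕ) + 1 : ℝ) ^ (1 - s) ≤
      |multichoose s n| * ((n : ℝ) + 1) ^ (1 - s) := by
  have hratio :
      (s + n) / (n + 1) ≤ ((n : ℝ) + 1) ^ (1 - s) / ((n + 1 : ℕ) + 1 : ℝ) ^ (1 - s) := by
    have := Real.one_sub_div_le_rpow (a := 1 - s) (y := n + 1) (by linarith) (by positivity)
    rw [Real.div_rpow (by positivity) (by positivity)] at this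
    push_cast
    convert this using 1
    field_simp
    ring
  rw [multichoose_succ_right, abs_mul, abs_of_nonneg (div_nonneg hn (by positivity)), mul_assoc]
  gcongr
  rwa [le_div_iff₀ (by positivity)] at hratio

theorem isBigO_multichoose {s : ℝ} (hs : s ≤ 1) :
    multichoose s =O[atTop] fun n : ℕ => (n : ℝ) ^ (s - 1) := by
  set K := ⌈-s⌉₊
  set b : ℕ → ℝ := fun n => |multichoose s n| * ((n : ℝ) + 1) ^ (1 - s)
  have hb : ∀ n, K ≤ n → b n ≤ b K := by
    intro n hn
    induction n, hn using Nat.le_induction with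
    | base => exact le_rfl
    | succ n hn ih =>
      have hsn : 0 ≤ s + n := by
        have : (K : ℝ) ≤ n := by exact_mod_cast hn
        linarith [Nat.le_ceil (-s)]
      exact (abs_multichoose_succ_mul_rpow_le hs hsn).trans ih
  refine IsBigO.of_bound (b K) ?_
  filter_upwards [eventually_ge_atTop (max K 1)] with n hn
  have hn1 : (1 : ℝ) ≤ n := by exact_mod_cast (le_max_right K 1).trans hn
  rw [Real.norm_eq_abs, Real.norm_of_nonneg (by positivity)]
  calc |multichoose s n| = b n * ((n : ℝ) + 1) ^ (s - 1) := by
        simp only [b, mul_assoc, ← Real.rpow_add (by positivity : (0 : ℝ) < n + 1)]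
        simp
    _ ≤ b K * (n : ℝ) ^ (s - 1) := by
        have hbn : 0 ≤ b n := by positivity
        exact mul_le_mul (hb n ((le_max_left K 1).trans hn))
          (Real.rpow_le_rpow_of_nonpos (by positivity) (by linarith) (by linarith))
          (by positivity) (hbn.trans (hb n ((le_max_left K 1).trans hn)))

theorem tendsto_multichoose_atTop {s : ℝ} (hs : s < 1) :
    Tendsto (multichoose s) atTop (𝓝 0) := by
  refine (isBigO_multichoose hs.le).trans_tendsto ?_
  rw [show s - 1 = -(1 - s) by ring]
  exact (tendsto_rpow_neg_atTop (by linarith)).comp tendsto_natCast_atTop_atTop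

theorem summable_multichoose {r : ℝ} (hr : r < 0) : Summable (multichoose r) :=
  summable_of_isBigO_nat (Real.summable_nat_rpow.mpr (by linarith))
    (isBigO_multichoose (by linarith))

theorem hasSum_multichoose {r : ℝ} (hr : r < 0) : HasSum (multichoose r) 0 := by
  rw [(summable_multichoose hr).hasSum_iff_tendsto_nat, ← tendsto_add_atTop_iff_nat 1]
  simpa only [sum_range_succ_multichoose] using
    tendsto_multichoose_atTop (by linarith : r + 1 < 1)

theorem hasSum_multichoose_mul_pow (p : ℕ) {r : ℝ} (h : r + p < 0) (x : ℂ) :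
    HasSum (fun n : ℕ => ((multichoose r n : ℝ) : ℂ) * (n + x) ^ p) 0 := by
  induction p generalizing r x with
  | zero => simpa using Complex.hasSum_ofReal.mpr (hasSum_multichoose (by simpa using h))
  | succ p ih =>
    have hr : r + p < 0 := by push_cast at h; linarith
    have hterm (n : ℕ) : ((multichoose r (n + 1) : ℝ) : ℂ) * ↑(n + 1) * (↑(n + 1) + x) ^ p =
        r * ((multichoose (r + 1) n : ℝ) * (n + (x + 1)) ^ p) := by
      have := congrArg ((↑) : ℝ → ℂ) (succ_mul_multichoose_succ r n)
      push_cast at this ⊢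
      rw [← mul_assoc, ← this]
      ring
    have hshift : HasSum (fun n : ℕ => ((multichoose r n : ℝ) : ℂ) * n * (n + x) ^ p) 0 := by
      refine (hasSum_nat_add_iff' 1).mp ?_
      simpa only [hterm, sum_range_one, Nat.cast_zero, mul_zero, zero_mul, sub_zero] using
        (ih (r := r + 1) (by push_cast at h; linarith) (x + 1)).mul_left (r : ℂ)
    convert hshift.add ((ih hr x).mul_left x) using 1
    · funext n
      ring
    · simp

end Ring

theorem multiple_hurwitz_zeta_vanishing_general (r : ℝ) (m : ℤ)
    (hm₁ : r < (m : ℝ)) (hm₂ : m ≤ 0) (x : ℂ) :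
    HasSum
      (fun n : ℕ =>
        (((∏ k ∈ Finset.range n, (r + (k : ℝ))) / (n.factorial : ℝ) : ℝ) : ℂ) *
          ((n : ℂ) + x) ^ (-m).toNat)
      0 := by
  have hp : r + ((-m).toNat : ℕ) < 0 := by
    have : ((-m).toNat : ℝ) = -m := by exact_mod_cast Int.toNat_of_nonneg (by omega)
    linarith
  simpa only [Ring.multichoose_eq_div_factorial, ascPochhammer_eval_eq_prod_range] using
    Ring.hasSum_multichoose_mul_pow _ hp x

theorem multiple_hurwitz_zeta_vanishing (r : ℝ) (hr : r < 0) (m : ℤ)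
    (hm₁ : r < (m : ℝ)) (hm₂ : m ≤ 0) (x : ℂ) :
    HasSum
      (fun n : ℕ =>
        (((∏ k ∈ Finset.range n, (r + (k : ℝ))) / (n.factorial : ℝ) : ℝ) : ℂ) *
          ((n : ℂ) + x) ^ (-m).toNat)
      0 :=
  multiple_hurwitz_zeta_vanishing_general r m hm₁ hm₂ x
end

section
/- Let r ≥ 1 be an integer and let s ∈ ℂ with Re(s) > r. Then exp( ∫_{1}^{∞} (u−1)^r · u^{−s−1} · (log u)^{−1} du ) = Π_{k=0}^{r} (s−k)^{(−1)^{r−k+1} C(r,k)}, where each factor is an integer power (zpow) of the nonzero complex number s−k. -/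
/-!
For `u > 1` we have `(log u)⁻¹ = ∫₀^∞ u^(-x) dx`, so Fubini turns the integral into
`∫₀^∞ ∫₁^∞ (u - 1)^r u^(-(s + x) - 1) du dx`. Expanding `(u - 1)^r = ∑ cₖ u^k` with
`cₖ = (-1)^(r-k) C(r,k)`, the inner integral is `∑ cₖ / (s + x - k)`, whose antiderivative
`∑ cₖ log (s + x - k)` tends to `0` at infinity because `∑ cₖ = (1 - 1)^r = 0`. Hence the integral
equals `-∑ cₖ log (s - k)`, and exponentiating gives the product.
-/

open MeasureTheory Complex Set Filter Topology

lemma Real.rpow_neg_eq_exp {u : ℝ} (hu : 0 < u) (x : ℝ) :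
    u ^ (-x) = Real.exp (-Real.log u * x) := by
  rw [Real.rpow_def_of_pos hu]; ring_nf

lemma integrableOn_rpow_neg_Ioi {u : ℝ} (hu : 1 < u) :
    IntegrableOn (fun x : ℝ => u ^ (-x)) (Ioi 0) := by
  simp only [Real.rpow_neg_eq_exp (zero_lt_one.trans hu)]
  exact integrableOn_exp_mul_Ioi (neg_lt_zero.2 (Real.log_pos hu)) 0

lemma integral_rpow_neg_Ioi {u : ℝ} (hu : 1 < u) :
    ∫ x in Ioi (0 : ℝ), u ^ (-x) = (Real.log u)⁻¹ := by
  simp only [Real.rpow_neg_eq_exp (zero_lt_one.trans hu)]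
  rw [integral_exp_mul_Ioi (neg_lt_zero.2 (Real.log_pos hu)), mul_zero, Real.exp_zero,
    neg_div_neg_eq, one_div]

section MellinFubini

variable {f : ℝ → ℂ}

lemma aestronglyMeasurable_of_integrableOn_mul_inv_log
    (hf : IntegrableOn (fun u => f u * (Real.log u : ℂ)⁻¹) (Ioi 1)) :
    AEStronglyMeasurable f (volume.restrict (Ioi 1)) := by
  refine (hf.aestronglyMeasurable.mul
    (Complex.measurable_ofReal.comp Real.measurable_log).aestronglyMeasurable).congr ?_
  filter_upwards [ae_restrict_mem measurableSet_Ioi] with u hu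
  have : (Real.log u : ℂ) ≠ 0 := ofReal_ne_zero.2 (Real.log_pos hu).ne'
  exact inv_mul_cancel_right₀ this (f u)

lemma integrable_mul_rpow_neg_prod
    (hf : IntegrableOn (fun u => f u * (Real.log u : ℂ)⁻¹) (Ioi 1)) :
    Integrable (fun p : ℝ × ℝ => f p.1 * ((p.1 ^ (-p.2) : ℝ) : ℂ))
      ((volume.restrict (Ioi 1)).prod (volume.restrict (Ioi 0))) := by
  have hmeas : AEStronglyMeasurable (fun p : ℝ × ℝ => f p.1 * ((p.1 ^ (-p.2) : ℝ) : ℂ))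
      ((volume.restrict (Ioi 1)).prod (volume.restrict (Ioi 0))) :=
    (aestronglyMeasurable_of_integrableOn_mul_inv_log hf).comp_fst.mul
      (by fun_prop : Measurable fun p : ℝ × ℝ => ((p.1 ^ (-p.2) : ℝ) : ℂ)).aestronglyMeasurable
  refine (integrable_prod_iff hmeas).2 ⟨?_, hf.norm.congr ?_⟩ <;>
    filter_upwards [ae_restrict_mem measurableSet_Ioi] with u hu
  · exact ((integrableOn_rpow_neg_Ioi hu).ofReal (𝕜 := ℂ)).const_mul (f u)
  · have hu0 : 0 ≤ u := zero_le_one.trans hu.le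
    simp only [norm_mul, norm_real, Real.norm_of_nonneg (Real.rpow_nonneg hu0 _)]
    rw [integral_const_mul, integral_rpow_neg_Ioi hu, norm_inv, norm_real,
      Real.norm_of_nonneg (Real.log_pos hu).le]

lemma integral_mul_inv_log_eq_integral_integral
    (hf : IntegrableOn (fun u => f u * (Real.log u : ℂ)⁻¹) (Ioi 1)) :
    ∫ u in Ioi (1 : ℝ), f u * (Real.log u : ℂ)⁻¹ =
      ∫ x in Ioi (0 : ℝ), ∫ u in Ioi (1 : ℝ), f u * ((u ^ (-x) : ℝ) : ℂ) := by
  rw [← integral_integral_swap (integrable_mul_rpow_neg_prod hf)]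
  refine setIntegral_congr_fun measurableSet_Ioi fun u hu => ?_
  rw [integral_const_mul, integral_complex_ofReal, integral_rpow_neg_Ioi hu, ofReal_inv]

lemma integrableOn_integral_mul_rpow_neg
    (hf : IntegrableOn (fun u => f u * (Real.log u : ℂ)⁻¹) (Ioi 1)) :
    IntegrableOn (fun x : ℝ => ∫ u in Ioi 1, f u * ((u ^ (-x) : ℝ) : ℂ)) (Ioi 0) :=
  (integrable_mul_rpow_neg_prod hf).integral_prod_right

end MellinFubini

section LogSum

variable {ι : Type*} {t : Finset ι} {a b : ι → ℂ}

lemma tendsto_log_add_ofReal_sub_log (b : ℂ) :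
    Tendsto (fun x : ℝ => log (b + x) - Real.log x) atTop (𝓝 0) := by
  have hinv : Tendsto (fun x : ℝ => ((x⁻¹ : ℝ) : ℂ)) atTop (𝓝 0) := by
    rw [← ofReal_zero]
    exact (continuous_ofReal.tendsto 0).comp tendsto_inv_atTop_zero
  have hlim : Tendsto (fun x : ℝ => 1 + b * ((x⁻¹ : ℝ) : ℂ)) atTop (𝓝 1) := by
    simpa using (hinv.const_mul b).const_add 1
  have heq : (fun x : ℝ => log (1 + b * ((x⁻¹ : ℝ) : ℂ))) =ᶠ[atTop]
      fun x => log (b + x) - Real.log x := by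
    filter_upwards [eventually_gt_atTop 0, hlim.eventually_ne one_ne_zero] with x hx hne
    rw [eq_sub_iff_add_eq', ← log_ofReal_mul hx hne, mul_add, mul_one, mul_left_comm,
      ← ofReal_mul, mul_inv_cancel₀ hx.ne', ofReal_one, mul_one, add_comm]
  simpa using ((continuousAt_clog one_mem_slitPlane).tendsto.comp hlim).congr' heq

lemma tendsto_sum_mul_log_add_ofReal (ha : ∑ i ∈ t, a i = 0) :
    Tendsto (fun x : ℝ => ∑ i ∈ t, a i * log (b i + x)) atTop (𝓝 0) := by
  have hsplit : ∀ x : ℝ, ∑ i ∈ t, a i * log (b i + x) =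
      ∑ i ∈ t, a i * (log (b i + x) - Real.log x) := fun x => by
    simp only [mul_sub, Finset.sum_sub_distrib, ← Finset.sum_mul, ha, zero_mul, sub_zero]
  simp_rw [hsplit]
  simpa using tendsto_finsetSum t fun i _ =>
    (tendsto_log_add_ofReal_sub_log (b i)).const_mul (a i)

lemma hasDerivAt_sum_mul_log_add_ofReal {x : ℝ} (hb : ∀ i ∈ t, 0 < (b i).re + x) :
    HasDerivAt (fun y : ℝ => ∑ i ∈ t, a i * log (b i + y)) (∑ i ∈ t, a i / (b i + x)) x := by
  refine HasDerivAt.fun_sum fun i hi => ?_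
  have hslit : b i + x ∈ slitPlane := mem_slitPlane_iff.2 (Or.inl (by simpa using hb i hi))
  simpa [div_eq_mul_inv] using
    (((hasDerivAt_id x).ofReal_comp.const_add (b i)).clog_real hslit).const_mul (a i)

lemma integral_Ioi_sum_div_add_ofReal (ha : ∑ i ∈ t, a i = 0) (hb : ∀ i ∈ t, 0 < (b i).re)
    (hint : IntegrableOn (fun x : ℝ => ∑ i ∈ t, a i / (b i + x)) (Ioi 0)) :
    ∫ x in Ioi (0 : ℝ), ∑ i ∈ t, a i / (b i + x) = -∑ i ∈ t, a i * log (b i) := by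
  simpa using integral_Ioi_of_hasDerivAt_of_tendsto'
    (fun x hx => hasDerivAt_sum_mul_log_add_ofReal fun i hi =>
      add_pos_of_pos_of_nonneg (hb i hi) hx)
    hint (tendsto_sum_mul_log_add_ofReal ha)

lemma exp_sum_intCast_mul_log {z : ι → ℂ} (n : ι → ℤ) (hz : ∀ i ∈ t, z i ≠ 0) :
    exp (∑ i ∈ t, n i * log (z i)) = ∏ i ∈ t, z i ^ n i := by
  rw [exp_sum]
  exact Finset.prod_congr rfl fun i hi => by rw [exp_int_mul, exp_log (hz i hi)]

end LogSum

lemma sub_one_pow_eq_sum {R : Type*} [CommRing R] (x : R) (r : ℕ) :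
    (x - 1) ^ r = ∑ k ∈ Finset.range (r + 1), (-1) ^ (r - k) * r.choose k * x ^ k := by
  rw [sub_eq_add_neg, add_pow]
  exact Finset.sum_congr rfl fun k _ => by ring

lemma sum_neg_one_pow_sub_mul_choose {R : Type*} [CommRing R] {r : ℕ} (hr : r ≠ 0) :
    ∑ k ∈ Finset.range (r + 1), (-1 : R) ^ (r - k) * r.choose k = 0 := by
  simpa [zero_pow hr] using (sub_one_pow_eq_sum (1 : R) r).symm

lemma integral_Ioi_sub_one_pow_mul_cpow (r : ℕ) {z : ℂ} (hz : r < z.re) :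
    ∫ u in Ioi (1 : ℝ), ((u : ℂ) - 1) ^ r * (u : ℂ) ^ (-z - 1) =
      ∑ k ∈ Finset.range (r + 1), (-1) ^ (r - k) * r.choose k / (z - k) := by
  have hre : ∀ k ∈ Finset.range (r + 1), ((k : ℂ) - z - 1).re < -1 := fun k hk => by
    have : (k : ℝ) ≤ r := by exact_mod_cast Finset.mem_range_succ_iff.1 hk
    simp only [sub_re, natCast_re, one_re]; linarith
  have hexpand : ∀ u ∈ Ioi (1 : ℝ), ((u : ℂ) - 1) ^ r * (u : ℂ) ^ (-z - 1) =
      ∑ k ∈ Finset.range (r + 1), (-1) ^ (r - k) * r.choose k * (u : ℂ) ^ ((k : ℂ) - z - 1) :=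
    fun u hu => by
      have hu0 : (u : ℂ) ≠ 0 := ofReal_ne_zero.2 (zero_lt_one.trans hu).ne'
      rw [sub_one_pow_eq_sum, Finset.sum_mul]
      refine Finset.sum_congr rfl fun k _ => ?_
      rw [show (k : ℂ) - z - 1 = k + (-z - 1) by ring, cpow_add _ _ hu0, cpow_natCast]
      ring
  rw [setIntegral_congr_fun measurableSet_Ioi hexpand, integral_finsetSum _ fun k hk =>
    (integrableOn_Ioi_cpow_of_lt (hre k hk) one_pos).const_mul _]
  refine Finset.sum_congr rfl fun k hk => ?_
  rw [integral_const_mul, integral_Ioi_cpow_of_lt (hre k hk) one_pos, ofReal_one, one_cpow,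
    show (k : ℂ) - z - 1 + 1 = -(z - k) by ring, div_neg, neg_div, neg_neg, mul_one_div]

lemma sub_one_pow_le_pow_mul_log {u : ℝ} (hu : 1 ≤ u) {r : ℕ} (hr : r ≠ 0) :
    (u - 1) ^ r ≤ u ^ r * Real.log u := by
  have hu0 : 0 < u := zero_lt_one.trans_le hu
  have hlin : u - 1 ≤ u * Real.log u := by
    have := mul_le_mul_of_nonneg_left (Real.one_sub_inv_le_log_of_pos hu0) hu0.le
    rwa [mul_sub, mul_one, mul_inv_cancel₀ hu0.ne'] at this
  obtain ⟨r, rfl⟩ := Nat.exists_eq_succ_of_ne_zero hr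
  calc (u - 1) ^ (r + 1) = (u - 1) ^ r * (u - 1) := pow_succ _ _
    _ ≤ u ^ r * (u * Real.log u) := by gcongr; linarith
    _ = u ^ (r + 1) * Real.log u := by ring

lemma integrableOn_sub_one_pow_mul_cpow_mul_inv_log {r : ℕ} (hr : r ≠ 0) {s : ℂ}
    (hs : r < s.re) :
    IntegrableOn (fun u : ℝ => ((u : ℂ) - 1) ^ r * (u : ℂ) ^ (-s - 1) * (Real.log u : ℂ)⁻¹)
      (Ioi 1) := by
  have hcont : ContinuousOn
      (fun u : ℝ => ((u : ℂ) - 1) ^ r * (u : ℂ) ^ (-s - 1) * (Real.log u : ℂ)⁻¹) (Ioi 1) := by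
    intro u hu
    have hu0 : 0 < u := zero_lt_one.trans hu
    refine ContinuousAt.continuousWithinAt ?_
    refine ((by fun_prop : Continuous fun u : ℝ => ((u : ℂ) - 1) ^ r).continuousAt.mul
      ?_).mul ?_
    · exact continuousAt_ofReal_cpow_const _ _ (Or.inr hu0.ne')
    · exact (continuous_ofReal.continuousAt.comp (Real.continuousAt_log hu0.ne')).inv₀
        (ofReal_ne_zero.2 (Real.log_pos hu).ne')
  refine (integrableOn_Ioi_rpow_of_lt (a := r - s.re - 1) (by linarith) one_pos).mono'
    (hcont.aestronglyMeasurable measurableSet_Ioi) ?_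
  filter_upwards [ae_restrict_mem measurableSet_Ioi] with u (hu : 1 < u)
  have hu0 : 0 < u := zero_lt_one.trans hu
  have hlog : 0 < Real.log u := Real.log_pos hu
  rw [norm_mul, norm_mul, norm_pow, norm_inv, norm_real, norm_cpow_eq_rpow_re_of_pos hu0,
    ← ofReal_one, ← ofReal_sub, norm_real, Real.norm_of_nonneg (by linarith),
    Real.norm_of_nonneg hlog.le]
  calc (u - 1) ^ r * u ^ (-s - 1).re * (Real.log u)⁻¹
      ≤ u ^ r * Real.log u * u ^ (-s - 1).re * (Real.log u)⁻¹ := by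
        gcongr; exact sub_one_pow_le_pow_mul_log hu.le hr
    _ = u ^ ((r : ℝ) + (-s - 1).re) := by
        rw [Real.rpow_add hu0, Real.rpow_natCast]; field_simp
    _ = u ^ ((r : ℝ) - s.re - 1) := by congr 1; simp; ring

lemma integral_Ioi_sub_one_pow_mul_cpow_mul_rpow_neg (r : ℕ) {s : ℂ} {x : ℝ}
    (h : r < s.re + x) :
    ∫ u in Ioi (1 : ℝ), ((u : ℂ) - 1) ^ r * (u : ℂ) ^ (-s - 1) * ((u ^ (-x) : ℝ) : ℂ) =
      ∑ k ∈ Finset.range (r + 1), (-1) ^ (r - k) * r.choose k / ((s - k) + x) := by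
  simp only [sub_add_eq_add_sub]
  rw [← integral_Ioi_sub_one_pow_mul_cpow r (z := s + x) (by simpa using h)]
  refine setIntegral_congr_fun measurableSet_Ioi fun u (hu : 1 < u) => ?_
  have hu0 : (u : ℂ) ≠ 0 := ofReal_ne_zero.2 (zero_lt_one.trans hu).ne'
  rw [ofReal_cpow (zero_lt_one.trans hu).le, mul_assoc, ← cpow_add _ _ hu0]
  push_cast; ring_nf

theorem absolute_zeta_Gm_tensor (r : ℕ) (hr : 1 ≤ r) (s : ℂ) (hs : (r : ℝ) < s.re) :
    Complex.exp (∫ u in Set.Ioi (1 : ℝ),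
        ((u : ℂ) - 1) ^ r * (u : ℂ) ^ (-s - 1) * (Real.log u : ℂ)⁻¹) =
    ∏ k ∈ Finset.range (r + 1),
      (s - (k : ℂ)) ^ ((-1 : ℤ) ^ (r - k + 1) * (r.choose k : ℤ)) := by
  have hr0 : r ≠ 0 := by omega
  have hpos : ∀ k ∈ Finset.range (r + 1), 0 < (s - k).re := fun k hk => by
    have : (k : ℝ) ≤ r := by exact_mod_cast Finset.mem_range_succ_iff.1 hk
    simp only [sub_re, natCast_re]; linarith
  have hf := integrableOn_sub_one_pow_mul_cpow_mul_inv_log hr0 hs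
  have hinner : ∀ x ∈ Ioi (0 : ℝ),
      ∫ u in Ioi (1 : ℝ), ((u : ℂ) - 1) ^ r * (u : ℂ) ^ (-s - 1) * ((u ^ (-x) : ℝ) : ℂ) =
        ∑ k ∈ Finset.range (r + 1), (-1) ^ (r - k) * r.choose k / ((s - k) + x) :=
    fun x (hx : 0 < x) => integral_Ioi_sub_one_pow_mul_cpow_mul_rpow_neg r (by linarith)
  rw [integral_mul_inv_log_eq_integral_integral hf,
    setIntegral_congr_fun measurableSet_Ioi hinner,
    integral_Ioi_sum_div_add_ofReal (sum_neg_one_pow_sub_mul_choose hr0) hpos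
      ((integrableOn_integral_mul_rpow_neg hf).congr_fun hinner measurableSet_Ioi),
    ← exp_sum_intCast_mul_log _ fun k hk => ne_zero_of_re_pos (hpos k hk)]
  rw [← Finset.sum_neg_distrib]
  push_cast
  congr 1
  exact Finset.sum_congr rfl fun k _ => by ring
end

section
/- Let r ≥ 1 be an integer and let s ∈ ℂ with s ≠ k for every integer 0 ≤ k ≤ r. Define ζ(s) = Π_{k=0}^{r} (s−k)^{(−1)^{r−k+1} C(r,k)} (integer powers, zpow). Then ζ(s) = ζ(r−s)^{(−1)^r}. -/
open Complex

/-- The absolute zeta function of `𝔾ₘ^{⊗r}`: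
`ζ(s) = ∏_{k=0}^{r} (s - k) ^ ((-1)^(r-k+1) * C(r,k))`. -/
noncomputable def absoluteZetaGm (r : ℕ) (s : ℂ) : ℂ :=
  ∏ k ∈ Finset.range (r + 1), (s - (k : ℂ)) ^ ((-1 : ℤ) ^ (r - k + 1) * (r.choose k : ℤ))

theorem absolute_zeta_Gm_functional_equation (r : ℕ) (hr : 1 ≤ r) (s : ℂ)
    (hs : ∀ k ≤ r, s ≠ (k : ℂ)) :
    absoluteZetaGm r s = (absoluteZetaGm r ((r : ℂ) - s)) ^ ((-1 : ℤ) ^ r) := by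
  unfold absoluteZetaGm
  rw [← Finset.prod_zpow]
  rw [← Finset.prod_range_reflect
    (fun k => (((r : ℂ) - s - (k : ℂ)) ^ ((-1 : ℤ) ^ (r - k + 1) * (r.choose k : ℤ))) ^
      ((-1 : ℤ) ^ r)) (r + 1)]
  have key : ∀ k ∈ Finset.range (r + 1),
      (((r : ℂ) - s - ((r + 1 - 1 - k : ℕ) : ℂ)) ^
          ((-1 : ℤ) ^ (r - (r + 1 - 1 - k) + 1) * (r.choose (r + 1 - 1 - k) : ℤ))) ^
        ((-1 : ℤ) ^ r)
      = (-1 : ℂ) ^ (r.choose k) *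
          (s - (k : ℂ)) ^ ((-1 : ℤ) ^ (r - k + 1) * (r.choose k : ℤ)) := by
    intro k hk
    rw [Finset.mem_range] at hk
    have hkr : k ≤ r := Nat.lt_succ_iff.mp hk
    have h1 : r + 1 - 1 - k = r - k := by omega
    have h2 : r - (r - k) = k := by omega
    have h3 : r.choose (r - k) = r.choose k := Nat.choose_symm hkr
    have hbase : (r : ℂ) - s - ((r - k : ℕ) : ℂ) = -(s - (k : ℂ)) := by
      rw [Nat.cast_sub hkr]; push_cast; ring
    rw [h1, h2, h3, hbase, ← zpow_mul]
    set C : ℕ := r.choose k with hC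
    have hexp : (-1 : ℤ) ^ (k + 1) * (C : ℤ) * (-1 : ℤ) ^ r
        = (-1 : ℤ) ^ (r - k + 1) * (C : ℤ) := by
      have h4 : k + 1 + r = (r - k + 1) + 2 * k := by omega
      rw [mul_right_comm, ← pow_add, h4, pow_add, pow_mul]
      norm_num
    rw [hexp, neg_eq_neg_one_mul, mul_zpow]
    congr 1
    rcases Nat.even_or_odd C with hCe | hCo
    · have hE : Even ((-1 : ℤ) ^ (r - k + 1) * (C : ℤ)) :=
        (Int.even_coe_nat C |>.mpr hCe).mul_left _
      rw [hE.neg_one_zpow, hCe.neg_one_pow]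
    · have hE : Odd ((-1 : ℤ) ^ (r - k + 1) * (C : ℤ)) :=
        Odd.mul (Odd.pow ⟨-1, by ring⟩) (Int.odd_coe_nat C |>.mpr hCo)
      rw [hE.neg_one_zpow, hCo.neg_one_pow]
  rw [Finset.prod_congr rfl key, Finset.prod_mul_distrib,
    Finset.prod_pow_eq_pow_sum, Nat.sum_range_choose]
  have h2r : Even (2 ^ r) := (Nat.even_pow).mpr ⟨even_two, by omega⟩
  rw [h2r.neg_one_pow, one_mul]
end

section
/- Let r ≥ 1 be an integer, let ω : Fin r → ℝ with ω(i) > 0 for all i, and let x, w ∈ ℂ with Re(x) > 0 and Re(w) > 0. Then (1/Γ(w)) · ∫_{0}^{∞} ( Π_{i} (1 − e^{−t·ω(i)}) ) · e^{−x t} · t^{w−1} dt = Σ_{S ⊆ Fin r} (−1)^{|S|} · (x + Σ_{i∈S} ω(i))^{−w}, the sum running over all subsets S of Fin r (including the empty set). -/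
/-!
Expanding the product,
`∏ i (1 - e^{-t ωᵢ}) e^{-x t} = ∑_S (-1)^|S| e^{-(x + ∑_{i ∈ S} ωᵢ) t}`, so the integral
splits into finitely many Gamma integrals `∫₀^∞ e^{-z t} t^{w-1} dt = Γ(w) z^{-w}` with
`re z > 0`. For real `z > 0` this is the substitution `u = z t`; for complex `z` it follows
by analytic continuation, the integral being holomorphic in `z` by differentiation under the
integral sign.
-/

open MeasureTheory Complex Set Filter Topology

lemma norm_cexp_neg_mul_mul_cpow (z s : ℂ) {t : ℝ} (ht : 0 < t) :
    ‖cexp (-z * t) * (t : ℂ) ^ s‖ = Real.exp (-(z.re * t)) * t ^ s.re := by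
  simp [norm_cpow_eq_rpow_re_of_pos ht, Complex.norm_exp]

lemma continuousOn_cexp_neg_mul_mul_cpow (z s : ℂ) :
    ContinuousOn (fun t : ℝ ↦ cexp (-z * t) * (t : ℂ) ^ s) (Ioi 0) := by
  refine (by fun_prop : Continuous fun t : ℝ ↦ cexp (-z * t)).continuousOn.mul fun t ht ↦ ?_
  exact ((continuousAt_cpow_const (ofReal_mem_slitPlane.2 ht)).comp
    continuous_ofReal.continuousAt).continuousWithinAt

lemma integrableOn_exp_neg_mul_mul_rpow {c s : ℝ} (hc : 0 < c) (hs : -1 < s) :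
    IntegrableOn (fun t : ℝ ↦ Real.exp (-(c * t)) * t ^ s) (Ioi 0) := by
  refine (integrableOn_rpow_mul_exp_neg_mul_rpow hs one_pos hc).congr_fun (fun t _ ↦ ?_)
    measurableSet_Ioi
  simp [mul_comm]

lemma integrableOn_cexp_neg_mul_mul_cpow {z s : ℂ} (hz : 0 < z.re) (hs : -1 < s.re) :
    IntegrableOn (fun t : ℝ ↦ cexp (-z * t) * (t : ℂ) ^ s) (Ioi 0) := by
  refine (integrableOn_exp_neg_mul_mul_rpow hz hs).mono'
    ((continuousOn_cexp_neg_mul_mul_cpow z s).aestronglyMeasurable measurableSet_Ioi) ?_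
  filter_upwards [ae_restrict_mem measurableSet_Ioi] with t ht
  exact (norm_cexp_neg_mul_mul_cpow z s ht).le

lemma hasDerivAt_cexp_neg_mul_mul_cpow (z s : ℂ) {t : ℝ} (ht : 0 < t) :
    HasDerivAt (fun z ↦ cexp (-z * t) * (t : ℂ) ^ s)
      (-(cexp (-z * t) * (t : ℂ) ^ (s + 1))) z := by
  have hlin : HasDerivAt (fun z : ℂ ↦ -z * t) (-t) z := by
    simpa using (hasDerivAt_id z).neg.mul_const (t : ℂ)
  refine (hlin.cexp.mul_const _).congr_deriv ?_
  rw [cpow_add _ _ (ofReal_ne_zero.2 ht.ne'), cpow_one]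
  ring

lemma differentiableOn_integral_cexp_neg_mul_mul_cpow {s : ℂ} (hs : -1 < s.re) :
    DifferentiableOn ℂ (fun z ↦ ∫ t in Ioi (0 : ℝ), cexp (-z * t) * (t : ℂ) ^ s)
      {z | 0 < z.re} := by
  intro z₀ hz₀
  set ε := z₀.re / 2 with hε_def
  have hε : 0 < ε := half_pos hz₀
  have hball : Metric.ball z₀ ε ⊆ {z | ε < z.re} := fun z hz ↦ by
    have := (abs_re_le_norm (z - z₀)).trans_lt (mem_ball_iff_norm.1 hz)
    rw [sub_re, abs_lt] at this
    change ε < z.re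
    linarith [hε_def]
  refine (hasDerivAt_integral_of_dominated_loc_of_deriv_le
    (F' := fun z t ↦ -(cexp (-z * t) * (t : ℂ) ^ (s + 1)))
    (bound := fun t ↦ Real.exp (-(ε * t)) * t ^ (s.re + 1))
    (Metric.ball_mem_nhds z₀ hε)
    (.of_forall fun z ↦ (continuousOn_cexp_neg_mul_mul_cpow z s).aestronglyMeasurable
      measurableSet_Ioi)
    (integrableOn_cexp_neg_mul_mul_cpow hz₀ hs)
    ((continuousOn_cexp_neg_mul_mul_cpow z₀ (s + 1)).neg.aestronglyMeasurable measurableSet_Ioi)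
    ?_ (integrableOn_exp_neg_mul_mul_rpow hε (by linarith)) ?_).2.differentiableAt
    |>.differentiableWithinAt
  · filter_upwards [ae_restrict_mem measurableSet_Ioi] with t (ht : 0 < t) z hz
    rw [norm_neg, norm_cexp_neg_mul_mul_cpow z _ ht, add_re, one_re]
    gcongr
    exact (hball hz).le
  · filter_upwards [ae_restrict_mem measurableSet_Ioi] with t ht z _
    exact hasDerivAt_cexp_neg_mul_mul_cpow z s ht

lemma integral_cexp_neg_ofReal_mul_mul_cpow {c : ℝ} (hc : 0 < c) {w : ℂ} (hw : 0 < w.re) :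
    ∫ t in Ioi (0 : ℝ), cexp (-(c : ℂ) * t) * (t : ℂ) ^ (w - 1) =
      Gamma w * (c : ℂ) ^ (-w) := by
  have harg : (c : ℂ).arg ≠ Real.pi := by
    rw [arg_ofReal_of_nonneg hc.le]
    exact Real.pi_pos.ne
  rw [cpow_neg, ← inv_cpow _ _ harg, ← one_div, mul_comm,
    ← integral_cpow_mul_exp_neg_mul_Ioi hw hc]
  refine setIntegral_congr_fun measurableSet_Ioi fun t _ ↦ ?_
  ring_nf

lemma integral_cexp_neg_mul_mul_cpow {z w : ℂ} (hz : 0 < z.re) (hw : 0 < w.re) :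
    ∫ t in Ioi (0 : ℝ), cexp (-z * t) * (t : ℂ) ^ (w - 1) = Gamma w * z ^ (-w) := by
  let I : ℂ → ℂ := fun z ↦ ∫ t in Ioi (0 : ℝ), cexp (-z * t) * (t : ℂ) ^ (w - 1)
  have hopen : IsOpen {z : ℂ | 0 < z.re} := isOpen_lt continuous_const continuous_re
  have hs : -1 < (w - 1).re := by rw [sub_re, one_re]; linarith
  have hI : AnalyticOnNhd ℂ I {z | 0 < z.re} :=
    (differentiableOn_integral_cexp_neg_mul_mul_cpow hs).analyticOnNhd hopen
  have hGamma : AnalyticOnNhd ℂ (fun z ↦ Gamma w * z ^ (-w)) {z | 0 < z.re} :=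
    DifferentiableOn.analyticOnNhd (fun z hz ↦
      ((differentiableAt_id.cpow_const (Or.inl hz)).const_mul _).differentiableWithinAt) hopen
  have hreal : ∃ᶠ c : ℝ in 𝓝[≠] 1, I c = Gamma w * (c : ℂ) ^ (-w) :=
    ((eventually_gt_nhds one_pos).filter_mono nhdsWithin_le_nhds).frequently.mono
      fun c hc ↦ integral_cexp_neg_ofReal_mul_mul_cpow hc hw
  have hofReal : Tendsto ((↑) : ℝ → ℂ) (𝓝[≠] 1) (𝓝[≠] 1) :=
    continuous_ofReal.continuousWithinAt.tendsto_nhdsWithin fun c hc ↦ by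
      simpa [← ofReal_one] using hc
  exact hI.eqOn_of_preconnected_of_frequently_eq hGamma (convex_halfSpace_re_gt 0).isPreconnected
    (by simp) (hofReal.frequently hreal) hz

lemma prod_one_sub_cexp_mul_cexp {ι : Type*} [Fintype ι] (a : ι → ℂ) (b t : ℂ) :
    (∏ i, (1 - cexp (-t * a i))) * cexp (-b * t) =
      ∑ S : Finset ι, (-1) ^ S.card * cexp (-(b + ∑ i ∈ S, a i) * t) := by
  classical
  rw [Finset.prod_sub, Finset.powerset_univ, Finset.sum_mul]
  refine Finset.sum_congr rfl fun S _ ↦ ?_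
  have hexponent : ∑ i ∈ S, -t * a i + -b * t = -(b + ∑ i ∈ S, a i) * t := by
    simp only [neg_mul, Finset.sum_neg_distrib, add_mul, Finset.sum_mul, mul_comm t]
    ring
  rw [Finset.prod_const_one, mul_one, ← exp_sum, mul_assoc, ← exp_add, hexponent]

theorem multiperiod_hurwitz_zeta_integral_representation_general (r : ℕ)
    (ω : Fin r → ℝ) (hω : ∀ i, 0 < ω i) (x w : ℂ) (hx : 0 < x.re) (hw : 0 < w.re) :
    (1 / Complex.Gamma w) *
      ∫ t in Set.Ioi (0 : ℝ),
        (∏ i, (1 - Complex.exp (-(t : ℂ) * (ω i : ℂ)))) *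
          Complex.exp (-x * (t : ℂ)) * (t : ℂ) ^ (w - 1) =
    ∑ S : Finset (Fin r),
      (-1 : ℂ) ^ S.card * (x + ∑ i ∈ S, (ω i : ℂ)) ^ (-w) := by
  have hre : ∀ S : Finset (Fin r), 0 < (x + ∑ i ∈ S, (ω i : ℂ)).re := fun S ↦ by
    rw [add_re, re_sum]
    simp only [ofReal_re]
    exact add_pos_of_pos_of_nonneg hx (Finset.sum_nonneg fun i _ ↦ (hω i).le)
  have hexpand : EqOn
      (fun t : ℝ ↦
        (∏ i, (1 - cexp (-(t : ℂ) * (ω i : ℂ)))) * cexp (-x * t) * (t : ℂ) ^ (w - 1))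
      (fun t : ℝ ↦ ∑ S : Finset (Fin r), (-1 : ℂ) ^ S.card *
        (cexp (-(x + ∑ i ∈ S, (ω i : ℂ)) * t) * (t : ℂ) ^ (w - 1))) (Ioi 0) :=
    fun t _ ↦ by simp only [prod_one_sub_cexp_mul_cexp, Finset.sum_mul, mul_assoc]
  have hs : -1 < (w - 1).re := by rw [sub_re, one_re]; linarith
  rw [setIntegral_congr_fun measurableSet_Ioi hexpand, integral_finsetSum _ fun S _ ↦
    ((integrableOn_cexp_neg_mul_mul_cpow (hre S) hs).const_mul _)]
  simp only [integral_const_mul, integral_cexp_neg_mul_mul_cpow (hre _) hw, Finset.mul_sum]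
  refine Finset.sum_congr rfl fun S _ ↦ ?_
  field_simp [Gamma_ne_zero_of_re_pos hw]

theorem multiperiod_hurwitz_zeta_integral_representation (r : ℕ) (hr : 1 ≤ r)
    (ω : Fin r → ℝ) (hω : ∀ i, 0 < ω i) (x w : ℂ) (hx : 0 < x.re) (hw : 0 < w.re) :
    (1 / Complex.Gamma w) *
      ∫ t in Set.Ioi (0 : ℝ),
        (∏ i, (1 - Complex.exp (-(t : ℂ) * (ω i : ℂ)))) *
          Complex.exp (-x * (t : ℂ)) * (t : ℂ) ^ (w - 1) =
    ∑ S : Finset (Fin r),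
      (-1 : ℂ) ^ S.card * (x + ∑ i ∈ S, (ω i : ℂ)) ^ (-w) :=
  multiperiod_hurwitz_zeta_integral_representation_general r ω hω x w hx hw
end

section
/- Let r ≥ 2 be an integer and let s ∈ ℂ with s − (r²−1) + Σ_{j∈S} j ≠ 0 for every subset S ⊆ {2, 3, …, r}. Define ζ_{SL(r)}(s) = Π_{S ⊆ {2,…,r}} ( s − (r²−1) + Σ_{j∈S} j )^{(−1)^{|S|+1}} (integer powers, zpow, product over all subsets S of {2,…,r} including the empty set). Then ζ_{SL(r)}(s) = ζ_{SL(r)}( r(3r−1)/2 − 1 − s )^{(−1)^{r−1}}. -/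
open Complex

lemma sumIccC (r : ℕ) (hr : 2 ≤ r) :
    ∑ j ∈ Finset.Icc 2 r, (j : ℂ) = (r : ℂ) * (r + 1) / 2 - 1 := by
  induction r, hr using Nat.le_induction with
  | base => norm_num
  | succ n hn ih =>
      rw [Finset.sum_Icc_succ_top (by omega), ih]
      push_cast
      ring

lemma expo (r c : ℕ) (hr : 2 ≤ r) (hc : c ≤ r - 1) :
    (-1 : ℤ) ^ (r - c) * (-1) ^ (r - 1) = (-1) ^ (c + 1) := by
  rw [← pow_add, neg_one_pow_eq_pow_mod_two, neg_one_pow_eq_pow_mod_two (n := c + 1)]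
  congr 1
  omega

lemma odd_neg_one_pow (m : ℕ) : Odd ((-1 : ℤ) ^ m) := by
  rcases Nat.even_or_odd m with h | h
  · rw [h.neg_one_pow]; decide
  · rw [h.neg_one_pow]; decide

/-- The absolute zeta function of `SL(r)`:
`ζ_{SL(r)}(s) = ∏_{S ⊆ {2,…,r}} (s - (r²-1) + Σ_{j∈S} j) ^ ((-1)^(|S|+1))`. -/
noncomputable def absoluteZetaSL (r : ℕ) (s : ℂ) : ℂ :=
  ∏ S ∈ (Finset.Icc 2 r).powerset,
    (s - ((r : ℂ) ^ 2 - 1) + ∑ j ∈ S, (j : ℂ)) ^ ((-1 : ℤ) ^ (S.card + 1))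

theorem absolute_zeta_SL_functional_equation (r : ℕ) (hr : 2 ≤ r) (s : ℂ)
    (hs : ∀ S ∈ (Finset.Icc 2 r).powerset,
      s - ((r : ℂ) ^ 2 - 1) + ∑ j ∈ S, (j : ℂ) ≠ 0) :
    absoluteZetaSL r s =
      (absoluteZetaSL r ((r : ℂ) * (3 * (r : ℂ) - 1) / 2 - 1 - s)) ^
        ((-1 : ℤ) ^ (r - 1)) := by
  classical
  set s' := (r : ℂ) * (3 * (r : ℂ) - 1) / 2 - 1 - s with hs'
  set A := Finset.Icc 2 r with hAdef
  have hA : A.card = r - 1 := by rw [hAdef, Nat.card_Icc]; omega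
  set f : Finset ℕ → ℂ := fun S => s - ((r : ℂ) ^ 2 - 1) + ∑ j ∈ S, (j : ℂ) with hf
  have hcard : ∀ S ∈ A.powerset, S.card ≤ r - 1 := fun S hS => by
    rw [← hA]; exact Finset.card_le_card (Finset.mem_powerset.mp hS)
  -- step 1: reindex ζ(s') by complements
  have step1 : absoluteZetaSL r s' =
      ∏ S ∈ A.powerset, -((f S) ^ ((-1 : ℤ) ^ (r - S.card))) := by
    unfold absoluteZetaSL
    refine (Finset.prod_nbij' (fun S => A \ S) (fun S => A \ S) ?_ ?_ ?_ ?_ ?_).symm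
    · intro S hS
      exact Finset.mem_powerset.mpr (Finset.sdiff_subset)
    · intro S hS
      exact Finset.mem_powerset.mpr (Finset.sdiff_subset)
    · intro S hS
      exact Finset.sdiff_sdiff_eq_self (Finset.mem_powerset.mp hS)
    · intro S hS
      exact Finset.sdiff_sdiff_eq_self (Finset.mem_powerset.mp hS)
    · intro S hS
      have hSsub := Finset.mem_powerset.mp hS
      have hval : s' - ((r : ℂ) ^ 2 - 1) + ∑ j ∈ A \ S, (j : ℂ) = -(f S) := by
        rw [Finset.sum_sdiff_eq_sub hSsub, hAdef, sumIccC r hr, hs', hf]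
        push_cast
        ring
      have hc : (A \ S).card + 1 = r - S.card := by
        rw [Finset.card_sdiff_of_subset hSsub, hA]
        have := hcard S hS
        omega
      rw [hval, hc, (odd_neg_one_pow (r - S.card)).neg_zpow]
  -- step 2: drop the signs (evenly many)
  have step2 : absoluteZetaSL r s' = ∏ S ∈ A.powerset, (f S) ^ ((-1 : ℤ) ^ (r - S.card)) := by
    rw [step1]
    simp only [neg_eq_neg_one_mul ((_ : ℂ) ^ (_ : ℤ)), Finset.prod_mul_distrib,
      Finset.prod_const, Finset.card_powerset, hA]
    have : Even (2 ^ (r - 1)) := (Nat.even_pow).mpr ⟨even_two, by omega⟩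
    rw [this.neg_one_pow, one_mul]
  -- conclude
  rw [step2, ← Finset.prod_zpow]
  unfold absoluteZetaSL
  refine Finset.prod_congr rfl fun S hS => ?_
  rw [← zpow_mul, expo r S.card hr (hcard S hS)]
end

section
/- Let r ≥ 1 be an integer and let s ∈ ℂ with s − r² + Σ_{j∈S} j ≠ 0 for every subset S ⊆ {1, 2, …, r}. Define ζ_{GL(r)}(s) = Π_{S ⊆ {1,…,r}} ( s − r² + Σ_{j∈S} j )^{(−1)^{|S|+1}} (integer powers, zpow, product over all subsets S of {1,…,r} including the empty set). Then ζ_{GL(r)}(s) = ζ_{GL(r)}( r(3r−1)/2 − s )^{(−1)^{r}}. -/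
open Complex

/-- The absolute zeta function of `GL(r)`:
`ζ_{GL(r)}(s) = ∏_{S ⊆ {1,…,r}} (s - r² + Σ_{j∈S} j) ^ ((-1)^(|S|+1))`. -/
noncomputable def absoluteZetaGL (r : ℕ) (s : ℂ) : ℂ :=
  ∏ S ∈ (Finset.Icc 1 r).powerset,
    (s - (r : ℂ) ^ 2 + ∑ j ∈ S, (j : ℂ)) ^ ((-1 : ℤ) ^ (S.card + 1))

lemma sum_Icc_cast (r : ℕ) : ∑ j ∈ Finset.Icc 1 r, (j : ℂ) = r * (r + 1) / 2 := by
  induction r with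
  | zero => simp
  | succ n ih =>
      rw [Finset.sum_Icc_succ_top (by omega), ih]
      push_cast
      ring

lemma neg_zpow_neg_one_pow (x : ℂ) (k : ℕ) :
    (-x) ^ ((-1 : ℤ) ^ k) = -(x ^ ((-1 : ℤ) ^ k)) := by
  rcases Nat.even_or_odd k with h | h
  · rw [h.neg_one_pow]; simp
  · rw [h.neg_one_pow]; simp [zpow_neg, inv_neg]

theorem absolute_zeta_GL_functional_equation (r : ℕ) (hr : 1 ≤ r) (s : ℂ)
    (hs : ∀ S ∈ (Finset.Icc 1 r).powerset,
      s - (r : ℂ) ^ 2 + ∑ j ∈ S, (j : ℂ) ≠ 0) :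
    absoluteZetaGL r s =
      (absoluteZetaGL r ((r : ℂ) * (3 * (r : ℂ) - 1) / 2 - s)) ^ ((-1 : ℤ) ^ r) := by
  classical
  unfold absoluteZetaGL
  set U := Finset.Icc 1 r with hU
  have hUcard : U.card = r := by simp [hU]
  set t : ℂ := (r : ℂ) * (3 * (r : ℂ) - 1) / 2 - s with ht
  -- reindex the product at t by complements
  have step1 : ∏ S ∈ U.powerset,
        (t - (r : ℂ) ^ 2 + ∑ j ∈ S, (j : ℂ)) ^ ((-1 : ℤ) ^ (S.card + 1))
      = ∏ S ∈ U.powerset,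
        (t - (r : ℂ) ^ 2 + ∑ j ∈ U \ S, (j : ℂ)) ^ ((-1 : ℤ) ^ ((U \ S).card + 1)) := by
    refine (Finset.prod_nbij' (fun S => U \ S) (fun S => U \ S) ?_ ?_ ?_ ?_ ?_).symm
    · intro a ha; simp
    · intro a ha; simp
    · intro a ha
      simp only [Finset.mem_powerset] at ha
      exact Finset.sdiff_sdiff_eq_self ha
    · intro a ha
      simp only [Finset.mem_powerset] at ha
      exact Finset.sdiff_sdiff_eq_self ha
    · intro a ha; rfl
  -- each reflected factor is the negative of the original factor
  have key : ∀ S ∈ U.powerset,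
      t - (r : ℂ) ^ 2 + ∑ j ∈ U \ S, (j : ℂ)
        = -(s - (r : ℂ) ^ 2 + ∑ j ∈ S, (j : ℂ)) := by
    intro S hS
    rw [Finset.mem_powerset] at hS
    rw [Finset.sum_sdiff_eq_sub hS, sum_Icc_cast, ht]
    ring
  have cardkey : ∀ S ∈ U.powerset, (U \ S).card = r - S.card := by
    intro S hS
    rw [Finset.mem_powerset] at hS
    rw [Finset.card_sdiff_of_subset hS, hUcard]
  rw [step1, ← Finset.prod_zpow]
  have step2 : ∏ S ∈ U.powerset,
        ((t - (r : ℂ) ^ 2 + ∑ j ∈ U \ S, (j : ℂ)) ^ ((-1 : ℤ) ^ ((U \ S).card + 1))) ^ ((-1 : ℤ) ^ r)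
      = ∏ S ∈ U.powerset,
        -((s - (r : ℂ) ^ 2 + ∑ j ∈ S, (j : ℂ)) ^ ((-1 : ℤ) ^ (S.card + 1))) := by
    refine Finset.prod_congr rfl fun S hS => ?_
    have hSU : S ⊆ U := Finset.mem_powerset.mp hS
    have hcard : S.card ≤ r := hUcard ▸ Finset.card_le_card hSU
    rw [key S hS, cardkey S hS, ← zpow_mul]
    have he : ((-1 : ℤ) ^ (r - S.card + 1)) * (-1 : ℤ) ^ r = (-1 : ℤ) ^ (S.card + 1) := by
      rw [← pow_add]
      have hexp : r - S.card + 1 + r = S.card + 1 + 2 * (r - S.card) := by omega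
      rw [hexp, pow_add, pow_mul]
      norm_num
    rw [he, neg_zpow_neg_one_pow]
  rw [step2]
  have : ∀ S ∈ U.powerset,
      -((s - (r : ℂ) ^ 2 + ∑ j ∈ S, (j : ℂ)) ^ ((-1 : ℤ) ^ (S.card + 1)))
        = (-1 : ℂ) * ((s - (r : ℂ) ^ 2 + ∑ j ∈ S, (j : ℂ)) ^ ((-1 : ℤ) ^ (S.card + 1))) := by
    intro S hS; ring
  rw [Finset.prod_congr rfl this, Finset.prod_mul_distrib, Finset.prod_const,
    Finset.card_powerset, hUcard]
  have heven : Even (2 ^ r) := by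
    rcases Nat.exists_eq_add_of_le hr with ⟨k, hk⟩
    subst hk
    exact ⟨2 ^ k, by rw [pow_add, pow_one]; ring⟩
  rw [heven.neg_one_pow, one_mul]
end

section
/- The series Σ_{n=1}^{∞} C(2n, n) / ((2n−1) · 4^n) converges and its sum equals 1, i.e. Σ'_{n≥1} (Nat.choose (2n) n : ℝ) / ((2n−1) · 4^n) = 1. -/
/-!
Write `a n = C(2n, n) / 4 ^ n`. Since `(n + 1) C(2n+2, n+1) = 2 (2n + 1) C(2n, n)`, we have
`a (n + 1) = a n (2n + 1) / (2n + 2)`, so the `n`-th term of the series is `a n - a (n + 1)` and the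
series telescopes to `a 0 - lim a = 1`. The limit is `0` because `a n ^ 2 (2n + 1) ≤ 1`.
-/

open Filter Finset Nat

theorem Antitone.hasSum_sub_succ {a : ℕ → ℝ} {l : ℝ} (ha : Antitone a)
    (hl : Tendsto a atTop (nhds l)) : HasSum (fun n => a n - a (n + 1)) (a 0 - l) := by
  rw [hasSum_iff_tendsto_nat_of_nonneg fun n => sub_nonneg.2 (ha n.le_succ)]
  simpa only [sum_range_sub'] using tendsto_const_nhds.sub hl

theorem centralBinom_succ_div_four_pow_succ (n : ℕ) :
    (centralBinom (n + 1) : ℝ) / 4 ^ (n + 1) =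
      centralBinom n / 4 ^ n * (2 * n + 1) / (2 * n + 2) := by
  have h : ((n + 1 : ℕ) : ℝ) * centralBinom (n + 1) = 2 * (2 * n + 1) * centralBinom n := by
    exact_mod_cast succ_mul_centralBinom_succ n
  push_cast at h
  field_simp
  rw [pow_succ]
  linear_combination 2 * 4 ^ n * h

theorem centralBinom_div_four_pow_sub_succ (n : ℕ) :
    (centralBinom n : ℝ) / 4 ^ n - centralBinom (n + 1) / 4 ^ (n + 1) =
      centralBinom (n + 1) / ((2 * n + 1) * 4 ^ (n + 1)) := by
  rw [mul_comm, ← div_div, centralBinom_succ_div_four_pow_succ]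
  field_simp
  ring

theorem antitone_centralBinom_div_four_pow : Antitone fun n => (centralBinom n : ℝ) / 4 ^ n := by
  refine antitone_nat_of_succ_le fun n => ?_
  rw [centralBinom_succ_div_four_pow_succ, mul_div_assoc]
  exact mul_le_of_le_one_right (by positivity) ((div_le_one (by positivity)).2 (by linarith))

theorem sq_centralBinom_div_four_pow_mul_le_one (n : ℕ) :
    ((centralBinom n : ℝ) / 4 ^ n) ^ 2 * (2 * n + 1) ≤ 1 := by
  induction n with
  | zero => simp
  | succ n ih =>
    set a := (centralBinom n : ℝ) / 4 ^ n
    -- `a n ^ 2 (2n + 1)` is nonincreasing because `(2n + 1)(2n + 3) ≤ (2n + 2) ^ 2`.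
    have hstep : (a * (2 * n + 1) / (2 * n + 2)) ^ 2 * (2 * n + 3) ≤ a ^ 2 * (2 * n + 1) := by
      rw [div_pow, div_mul_eq_mul_div, div_le_iff₀ (by positivity)]
      nlinarith [sq_nonneg a, mul_nonneg (sq_nonneg a) (n.cast_nonneg : (0 : ℝ) ≤ n)]
    rw [centralBinom_succ_div_four_pow_succ]
    push_cast
    linarith

theorem tendsto_centralBinom_div_four_pow :
    Tendsto (fun n => (centralBinom n : ℝ) / 4 ^ n) atTop (nhds 0) := by
  have hsq : Tendsto (fun n => ((centralBinom n : ℝ) / 4 ^ n) ^ 2) atTop (nhds 0) := by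
    refine squeeze_zero (fun n => by positivity) (fun n => ?_)
      (tendsto_one_div_add_atTop_nhds_zero_nat)
    rw [le_div_iff₀ (by positivity)]
    have := sq_centralBinom_div_four_pow_mul_le_one n
    nlinarith [sq_nonneg ((centralBinom n : ℝ) / 4 ^ n)]
  convert hsq.sqrt using 2 with n
  · rw [Real.sqrt_sq (by positivity)]
  · rw [Real.sqrt_zero]

theorem central_binomial_series_eq_one :
    HasSum
      (fun n : ℕ =>
        (((2 * (n + 1)).choose (n + 1) : ℝ)) /
          ((2 * (n : ℝ) + 1) * 4 ^ (n + 1)))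
      1 := by
  have h := antitone_centralBinom_div_four_pow.hasSum_sub_succ tendsto_centralBinom_div_four_pow
  simp only [centralBinom_div_four_pow_sub_succ] at h
  simpa [centralBinom_eq_two_mul_choose] using h
end
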